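/- Let A = k⟨x₁, x₂, x₃⟩ be the DG algebra with |x₁| = |x₂| = 0, |x₃| = −1, dx₁ = dx₂ = 0, dx₃ = x₁x₂ − x₂x₁ − 1. Then the quotient map A → A/(x₃, δ) ≅ A₁ (the first Weyl algebra concentrated in degree 0 with zero differential) is a quasi-isomorphism of DG algebras. In particular, H⁰(A) ≅ A₁ and Hⁿ(A) = 0 for n ≠ 0. -/

import Mathlib

noncomputable section

/-- The underlying graded algebra: the free algebra `A = k⟨x₁, x₂, x₃⟩`. -/
abbrev FA3 (k : Type) [Field k] := MonoidAlgebra k (FreeMonoid (Fin 3))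

/-- The free algebra `k⟨x₁, x₂⟩`. -/
abbrev FA2 (k : Type) [Field k] := MonoidAlgebra k (FreeMonoid (Fin 2))

/-- The generators of `A`: `X 0 = x₁`, `X 1 = x₂`, `X 2 = x₃`. -/
def X {k : Type} [Field k] (i : Fin 3) : FA3 k :=
  MonoidAlgebra.single (FreeMonoid.of i) 1

/-- The generators of `k⟨x₁, x₂⟩`. -/
def Y {k : Type} [Field k] (i : Fin 2) : FA2 k :=
  MonoidAlgebra.single (FreeMonoid.of i) 1

/-- Cohomological degree of a word for generator degrees `degs`. -/
def wdeg (degs : Fin 3 → ℤ) (w : FreeMonoid (Fin 3)) : ℤ :=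
  ((FreeMonoid.toList w).map degs).sum

/-- The sign operator used in the graded Leibniz rule. -/
def sgn {k : Type} [Field k] (degs : Fin 3 → ℤ) (f : FA3 k) : FA3 k :=
  f.coeff.sum fun w c => ((Int.negOnePow (wdeg degs w) : ℤˣ) : ℤ) • MonoidAlgebra.single w c

/-- The defining relation of the first Weyl algebra: `x₁ * x₂ = x₂ * x₁ + 1`. -/
def weylRel (k : Type) [Field k] : FA2 k → FA2 k → Prop :=
  fun a b => a = Y 0 * Y 1 ∧ b = Y 1 * Y 0 + 1

/-- The first Weyl algebra `A₁ = k⟨x₁, x₂⟩/(x₁x₂ − x₂x₁ − 1)`, viewed as a DG algebra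
concentrated in degree 0 with zero differential. -/
abbrev Weyl (k : Type) [Field k] := RingQuot (weylRel k)

/-- The quotient map `A → A/(x₃, δ) ≅ A₁`, sending `x₁ ↦ x₁`, `x₂ ↦ x₂`, `x₃ ↦ 0`. -/
def π (k : Type) [Field k] : FA3 k →ₐ[k] Weyl k :=
  (RingQuot.mkAlgHom k (weylRel k)).comp
    ((MonoidAlgebra.lift k (FA2 k) (FreeMonoid (Fin 3)))
      (FreeMonoid.lift ![Y 0, Y 1, 0]))

/-!
The differential is contracted, modulo normal forms, by rewriting words. Call the words
`x₂ⁱ x₁ʲ` normal. Resolving the leftmost `x₁x₂` in front of every `x₃` by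
`x₁x₂ = x₂x₁ + 1 + d x₃` defines a linear map `h` with `f - d (h f) - h (d f)` in the span of
the normal words for every `f`; the rewriting terminates because it lowers the number of pairs
`x₁ … x₂`. Since `x₁ ↦ d/dX`, `x₂ ↦ X` represents `A₁` on `k[X]`, and the operators `Xⁱ (d/dX)ʲ`
are linearly independent in characteristic `0`, `π` is injective on the normal words. Hence a
cycle `f` with `π f = 0` equals `d (h f)`. The other two claims only need checking on generators,
because the Leibniz rule makes `{f | π (d f) = 0}` and the cycles subalgebras.
-/

section Leibniz

variable {R A B : Type*} [CommSemiring R] [Ring A] [Algebra R A] [Semiring B] [Algebra R B]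
  {d : A →ₗ[R] A} {σ : A → A}

theorem map_one_eq_zero_of_leibniz (hσ : σ 1 = 1)
    (hd : ∀ f g, d (f * g) = d f * g + σ f * d g) : d 1 = 0 := by
  simpa [hσ] using hd 1 1

def leibnizKerSubalgebra (φ : A →ₐ[R] B) (hσ : σ 1 = 1)
    (hd : ∀ f g, d (f * g) = d f * g + σ f * d g) : Subalgebra R A where
  carrier := {f | φ (d f) = 0}
  mul_mem' {f g} hf hg := by simp_all
  add_mem' {f g} hf hg := by simp_all
  algebraMap_mem' r := by
    simp [Algebra.algebraMap_eq_smul_one, map_one_eq_zero_of_leibniz hσ hd]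

end Leibniz

theorem MonoidAlgebra.adjoin_single_freeMonoid_of_eq_top (k α : Type*) [CommSemiring k] :
    Algebra.adjoin k (Set.range fun i : α => single (FreeMonoid.of i) (1 : k)) = ⊤ := by
  refine Algebra.eq_top_iff.mpr fun f => ?_
  induction f using MonoidAlgebra.induction_on with
  | of m =>
    induction m using FreeMonoid.inductionOn' with
    | one => exact one_mem _
    | of_mul i w ih =>
      rw [map_mul]
      exact mul_mem (Algebra.subset_adjoin ⟨i, rfl⟩) ih
  | add f g hf hg => exact add_mem hf hg
  | smul c f hf => exact Subalgebra.smul_mem _ hf c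

section Words

variable (k : Type) [Field k]

def ofWord (l : List (Fin 3)) : FA3 k := MonoidAlgebra.single (FreeMonoid.ofList l) 1

variable {k}

@[simp] theorem ofWord_nil : ofWord k [] = 1 := rfl

theorem ofWord_append (l₁ l₂ : List (Fin 3)) :
    ofWord k (l₁ ++ l₂) = ofWord k l₁ * ofWord k l₂ := by
  rw [ofWord, ofWord, ofWord, MonoidAlgebra.single_mul_single, one_mul]; rfl

theorem ofWord_cons (i : Fin 3) (l : List (Fin 3)) : ofWord k (i :: l) = X i * ofWord k l :=
  ofWord_append [i] l

theorem ofWord_replicate (i : Fin 3) (n : ℕ) : ofWord k (List.replicate n i) = X i ^ n := by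
  induction n with
  | zero => rfl
  | succ n ih => rw [List.replicate_succ, ofWord_cons, ih, pow_succ']

theorem single_eq_smul_ofWord (w : FreeMonoid (Fin 3)) (c : k) :
    MonoidAlgebra.single w c = c • ofWord k w.toList := by
  rw [ofWord, FreeMonoid.ofList_toList, MonoidAlgebra.smul_single', mul_one]

theorem ofWord_mul_single (l : List (Fin 3)) (w : FreeMonoid (Fin 3)) (c : k) :
    ofWord k l * MonoidAlgebra.single w c = c • ofWord k (l ++ w.toList) := by
  rw [single_eq_smul_ofWord, mul_smul_comm, ofWord_append]

theorem ofWord_mul_X_mul (p : List (Fin 3)) (i : Fin 3) (f : FA3 k) :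
    ofWord k p * (X i * f) = ofWord k (p ++ [i]) * f := by
  rw [ofWord_append, ofWord_cons, ofWord_nil, mul_one, mul_assoc]

end Words

theorem sgn_one {k : Type} [Field k] (degs : Fin 3 → ℤ) : sgn degs (1 : FA3 k) = 1 := by
  simp [sgn, MonoidAlgebra.one_def, wdeg]

theorem sgn_X {k : Type} [Field k] (degs : Fin 3 → ℤ) (i : Fin 3) :
    sgn degs (X i : FA3 k) = ((degs i).negOnePow : ℤ) • X i := by
  simp [sgn, X, wdeg]

structure IsWeylDifferential {k : Type} [Field k] (d : FA3 k →ₗ[k] FA3 k) : Prop where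
  leibniz : ∀ f g, d (f * g) = d f * g + sgn ![0, 0, -1] f * d g
  map_X0 : d (X 0) = 0
  map_X1 : d (X 1) = 0
  map_X2 : d (X 2) = X 0 * X 1 - X 1 * X 0 - 1

namespace IsWeylDifferential

variable {k : Type} [Field k] {d : FA3 k →ₗ[k] FA3 k}

theorem map_one (hd : IsWeylDifferential d) : d 1 = 0 :=
  map_one_eq_zero_of_leibniz (sgn_one _) hd.leibniz

theorem map_X_mul (hd : IsWeylDifferential d) {i : Fin 3} (hi : i ≠ 2) (f : FA3 k) :
    d (X i * f) = X i * d f := by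
  rw [hd.leibniz, sgn_X]
  fin_cases i
  · simp [hd.map_X0]
  · simp [hd.map_X1]
  · exact absurd rfl hi

theorem map_X2_mul (hd : IsWeylDifferential d) (f : FA3 k) :
    d (X 2 * f) = (X 0 * X 1 - X 1 * X 0 - 1) * f - X 2 * d f := by
  rw [hd.leibniz, sgn_X, hd.map_X2]
  simp [sub_eq_add_neg]

theorem map_ofWord_mul (hd : IsWeylDifferential d) {p : List (Fin 3)} (hp : 2 ∉ p) (f : FA3 k) :
    d (ofWord k p * f) = ofWord k p * d f := by
  induction p with
  | nil => simp
  | cons i p ih =>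
    rw [List.mem_cons, not_or] at hp
    rw [ofWord_cons, mul_assoc, hd.map_X_mul (Ne.symm hp.1), ih hp.2, mul_assoc]

theorem map_ofWord (hd : IsWeylDifferential d) {p : List (Fin 3)} (hp : 2 ∉ p) :
    d (ofWord k p) = 0 := by
  simpa [hd.map_one] using hd.map_ofWord_mul hp 1

end IsWeylDifferential

section Projection

variable {k : Type} [Field k]

theorem π_X0 : π k (X 0) = RingQuot.mkAlgHom k (weylRel k) (Y 0) := by
  simp [π, X]

theorem π_X1 : π k (X 1) = RingQuot.mkAlgHom k (weylRel k) (Y 1) := by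
  simp [π, X]

theorem π_weyl_relator : π k (X 0 * X 1 - X 1 * X 0 - 1) = 0 := by
  rw [map_sub, map_sub, map_mul, map_mul, map_one, π_X0, π_X1, ← map_mul, ← map_mul,
    RingQuot.mkAlgHom_rel k (show weylRel k (Y 0 * Y 1) (Y 1 * Y 0 + 1) from ⟨rfl, rfl⟩)]
  simp

theorem subalgebra_eq_top_of_X_mem {S : Subalgebra k (FA3 k)} (hS : ∀ i, X i ∈ S) : S = ⊤ :=
  top_le_iff.mp <| MonoidAlgebra.adjoin_single_freeMonoid_of_eq_top k (Fin 3) ▸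
    Algebra.adjoin_le (Set.range_subset_iff.mpr hS)

theorem Weyl.adjoin_eq_top :
    Algebra.adjoin k {RingQuot.mkAlgHom k (weylRel k) (Y 0),
      RingQuot.mkAlgHom k (weylRel k) (Y 1)} = ⊤ := by
  rw [← (AlgHom.range_eq_top _).mpr (RingQuot.mkAlgHom_surjective k (weylRel k)),
    ← Algebra.map_top, ← MonoidAlgebra.adjoin_single_freeMonoid_of_eq_top k (Fin 2),
    AlgHom.map_adjoin]
  congr 1
  ext
  simp [Fin.exists_fin_two, Y, eq_comm]

variable {d : FA3 k →ₗ[k] FA3 k}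

def IsWeylDifferential.cycles (hd : IsWeylDifferential d) : Subalgebra k (FA3 k) :=
  leibnizKerSubalgebra (AlgHom.id k (FA3 k)) (sgn_one _) hd.leibniz

theorem IsWeylDifferential.π_map_eq_zero (hd : IsWeylDifferential d) (f : FA3 k) :
    π k (d f) = 0 := by
  have hS : leibnizKerSubalgebra (π k) (sgn_one _) hd.leibniz = ⊤ := by
    refine subalgebra_eq_top_of_X_mem fun i => ?_
    fin_cases i
    · exact (congrArg (π k) hd.map_X0).trans (map_zero _)
    · exact (congrArg (π k) hd.map_X1).trans (map_zero _)
    · exact (congrArg (π k) hd.map_X2).trans π_weyl_relator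
  exact (hS ▸ Algebra.mem_top : f ∈ leibnizKerSubalgebra (π k) (sgn_one _) hd.leibniz)

theorem IsWeylDifferential.exists_cycle_π_eq (hd : IsWeylDifferential d) (w : Weyl k) :
    ∃ f, d f = 0 ∧ π k f = w := by
  have hS : hd.cycles.map (π k) = ⊤ := by
    rw [eq_top_iff, ← Weyl.adjoin_eq_top, Algebra.adjoin_le_iff, Set.pair_subset_iff]
    exact ⟨⟨X 0, hd.map_X0, π_X0⟩, ⟨X 1, hd.map_X1, π_X1⟩⟩
  obtain ⟨f, hf, rfl⟩ := Subalgebra.mem_map.mp (hS ▸ Algebra.mem_top (x := w))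
  exact ⟨f, hf, rfl⟩

end Projection

namespace Polynomial

open LinearMap

theorem coeff_mulLeft_X_pow_mul_derivative_pow_X_pow {R : Type*} [CommRing R] {i j n : ℕ}
    (hnj : n ≤ j) (m : ℕ) :
    ((mulLeft R (X : R[X]) ^ i * derivative ^ j : Module.End R R[X]) (X ^ n)).coeff m =
      if i = m ∧ j = n then (n.factorial : R) else 0 := by
  rw [Module.End.mul_apply, pow_mulLeft, mulLeft_apply, Module.End.pow_apply,
    iterate_derivative_X_pow_eq_C_mul, Nat.sub_eq_zero_of_le hnj, pow_zero, mul_one,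
    coeff_X_pow_mul', coeff_C]
  rcases hnj.eq_or_lt with rfl | hlt
  · by_cases him : i = m
    · simp [him, Nat.descFactorial_self]
    · simp [him]
      omega
  · simp [Nat.descFactorial_eq_zero_iff_lt.mpr hlt, hlt.ne']

theorem linearIndependent_mulLeft_X_pow_mul_derivative_pow {R : Type*} [CommRing R] [IsDomain R]
    [CharZero R] :
    LinearIndependent R fun ij : ℕ × ℕ => mulLeft R (X : R[X]) ^ ij.1 * derivative ^ ij.2 := by
  rw [linearIndependent_iff]
  intro l hl
  suffices ∀ j i, l (i, j) = 0 from Finsupp.ext fun ij => this ij.2 ij.1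
  intro j₀
  induction j₀ using Nat.strong_induction_on with
  | _ j₀ ih =>
  intro i₀
  -- Evaluate at `X ^ j₀`: for `j > j₀` the operator kills it, for `j = j₀` it gives `j₀! Xⁱ`.
  have key := congrArg (fun L : Module.End R R[X] => (L (X ^ j₀)).coeff i₀) hl
  simp only [Finsupp.linearCombination_apply, Finsupp.sum, LinearMap.sum_apply,
    LinearMap.smul_apply, finsetSum_coeff, coeff_smul, smul_eq_mul,
    LinearMap.zero_apply, coeff_zero] at key
  rw [Finset.sum_eq_single (i₀, j₀)] at key
  · rw [coeff_mulLeft_X_pow_mul_derivative_pow_X_pow le_rfl, if_pos ⟨rfl, rfl⟩] at key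
    exact (mul_eq_zero.mp key).resolve_right (Nat.cast_ne_zero.mpr (Nat.factorial_ne_zero _))
  · rintro ⟨i, j⟩ - hne
    rcases lt_or_ge j j₀ with hlt | hle
    · rw [ih j hlt i, zero_mul]
    · rw [coeff_mulLeft_X_pow_mul_derivative_pow_X_pow hle, if_neg, mul_zero]
      rintro ⟨rfl, rfl⟩
      exact hne rfl
  · intro h
    rw [Finsupp.notMem_support_iff.mp h, zero_mul]

end Polynomial

section NormalWords

open scoped Polynomial

open Polynomial (derivative)

def normalWord (i j : ℕ) : List (Fin 3) := List.replicate i 1 ++ List.replicate j 0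

variable (k : Type) [Field k]

def weylRep : Weyl k →ₐ[k] Module.End k k[X] :=
  RingQuot.liftAlgHom k
    ⟨MonoidAlgebra.lift k _ _ (FreeMonoid.lift ![derivative, LinearMap.mulLeft k Polynomial.X]), by
      rintro _ _ ⟨rfl, rfl⟩
      refine LinearMap.ext fun p => ?_
      simp [Y, add_comm]⟩

def normalSpan : Submodule k (FA3 k) :=
  Submodule.span k (Set.range fun ij : ℕ × ℕ => ofWord k (normalWord ij.1 ij.2))

variable {k}

theorem weylRep_mkAlgHom_Y (i : Fin 2) :
    weylRep k (RingQuot.mkAlgHom k (weylRel k) (Y i)) =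
      ![derivative, LinearMap.mulLeft k Polynomial.X] i := by
  simp [weylRep, Y]

theorem weylRep_π_ofWord_normalWord (i j : ℕ) :
    weylRep k (π k (ofWord k (normalWord i j))) =
      LinearMap.mulLeft k Polynomial.X ^ i * derivative ^ j := by
  rw [normalWord, ofWord_append, ofWord_replicate, ofWord_replicate, map_mul, map_mul, map_pow,
    map_pow, map_pow, map_pow, π_X0, π_X1, weylRep_mkAlgHom_Y, weylRep_mkAlgHom_Y]
  rfl

theorem linearIndependent_π_ofWord_normalWord [CharZero k] :
    LinearIndependent k fun ij : ℕ × ℕ => π k (ofWord k (normalWord ij.1 ij.2)) := by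
  refine LinearIndependent.of_comp (weylRep k).toLinearMap ?_
  simpa only [Function.comp_def, AlgHom.toLinearMap_apply, weylRep_π_ofWord_normalWord] using
    Polynomial.linearIndependent_mulLeft_X_pow_mul_derivative_pow (R := k)

theorem eq_zero_of_mem_normalSpan_of_π_eq_zero [CharZero k] {f : FA3 k} (hf : f ∈ normalSpan k)
    (hπ : π k f = 0) : f = 0 := by
  rw [normalSpan, ← Finsupp.range_linearCombination] at hf
  obtain ⟨c, rfl⟩ := hf
  rw [← AlgHom.toLinearMap_apply, Finsupp.apply_linearCombination] at hπ
  rw [linearIndependent_iff.mp linearIndependent_π_ofWord_normalWord c hπ, map_zero]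

end NormalWords

section Scan

def IsNormalWord (w : List (Fin 3)) : Prop := ∃ i j, w = normalWord i j

theorem IsNormalWord.cons {p : List (Fin 3)} (hp : IsNormalWord p) {i : Fin 3} (h2 : i ≠ 2)
    (h01 : ¬(i = 0 ∧ p.head? = some 1)) : IsNormalWord (i :: p) := by
  obtain ⟨a, b, rfl⟩ := hp
  fin_cases i
  · obtain rfl : a = 0 := by
      by_contra ha
      obtain ⟨a, rfl⟩ := Nat.exists_eq_succ_of_ne_zero ha
      exact h01 ⟨rfl, rfl⟩
    exact ⟨0, b + 1, rfl⟩
  · exact ⟨a + 1, b, rfl⟩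
  · exact absurd rfl h2

theorem IsNormalWord.two_notMem {p : List (Fin 3)} (hp : IsNormalWord p) : 2 ∉ p := by
  obtain ⟨a, b, rfl⟩ := hp
  simp [normalWord, List.mem_replicate]

/-- Finds the leftmost `x₁x₂` that stands before every `x₃`. -/
def scanRedex : List (Fin 3) → Option (List (Fin 3) × List (Fin 3))
  | [] => none
  | i :: u =>
    if i = 2 then none
    else if i = 0 ∧ u.head? = some 1 then some ([], u.tail)
    else (scanRedex u).map fun pu => (i :: pu.1, pu.2)

theorem scanRedex_cons_of_ne {i : Fin 3} {u : List (Fin 3)} (h2 : i ≠ 2)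
    (h01 : ¬(i = 0 ∧ u.head? = some 1)) :
    scanRedex (i :: u) = (scanRedex u).map fun pu => (i :: pu.1, pu.2) := by
  rw [scanRedex, if_neg h2, if_neg h01]

theorem scanRedex_eq_some {w p u : List (Fin 3)} (h : scanRedex w = some (p, u)) :
    w = p ++ 0 :: 1 :: u ∧ IsNormalWord p := by
  induction w generalizing p u with
  | nil => simp [scanRedex] at h
  | cons i w ih =>
    rw [scanRedex] at h
    split_ifs at h with h2 h01
    · obtain ⟨rfl, hw⟩ := h01
      obtain ⟨rfl, rfl⟩ := Prod.mk.inj (Option.some.inj h)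
      obtain ⟨_, w, rfl⟩ := List.head?_eq_some_iff.mp hw
      exact ⟨rfl, 0, 0, rfl⟩
    · obtain ⟨⟨p, u⟩, hs, heq⟩ := Option.map_eq_some_iff.mp h
      obtain ⟨rfl, rfl⟩ := Prod.mk.inj heq
      obtain ⟨rfl, hp⟩ := ih hs
      refine ⟨rfl, hp.cons h2 fun h => h01 ⟨h.1, ?_⟩⟩
      cases p <;> simp_all

theorem scanRedex_eq_none {w : List (Fin 3)} (h : scanRedex w = none) :
    IsNormalWord w ∨ ∃ p u, w = p ++ 2 :: u ∧ IsNormalWord p := by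
  induction w with
  | nil => exact Or.inl ⟨0, 0, rfl⟩
  | cons i w ih =>
    rw [scanRedex] at h
    split_ifs at h with h2 h01
    · exact Or.inr ⟨[], w, by rw [h2]; rfl, 0, 0, rfl⟩
    rcases ih (Option.map_eq_none_iff.mp h) with hw | ⟨p, u, rfl, hp⟩
    · exact Or.inl (hw.cons h2 h01)
    · refine Or.inr ⟨i :: p, u, rfl, hp.cons h2 fun h => h01 ⟨h.1, ?_⟩⟩
      cases p <;> simp_all

theorem scanRedex_normalWord_append (a b : ℕ) {w : List (Fin 3)} (hw : w.head? ≠ some 1) :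
    scanRedex (normalWord a b ++ w) =
      (scanRedex w).map fun pu => (normalWord a b ++ pu.1, pu.2) := by
  induction a with
  | zero =>
    induction b with
    | zero => simp [normalWord]
    | succ b ih =>
      have h01 : ¬((0 : Fin 3) = 0 ∧ (normalWord 0 b ++ w).head? = some 1) := by
        cases b <;> simp [normalWord, List.replicate_succ, hw]
      change scanRedex (0 :: (normalWord 0 b ++ w)) = _
      rw [scanRedex_cons_of_ne (by decide) h01, ih, Option.map_map]
      rfl
  | succ a ih =>
    change scanRedex (1 :: (normalWord a b ++ w)) = _
    rw [scanRedex_cons_of_ne (by decide) (by simp), ih, Option.map_map]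
    rfl

theorem IsNormalWord.scanRedex_append_zero_one {p : List (Fin 3)} (hp : IsNormalWord p)
    (u : List (Fin 3)) :
    scanRedex (p ++ 0 :: 1 :: u) = some (p, u) := by
  obtain ⟨a, b, rfl⟩ := hp
  rw [scanRedex_normalWord_append a b (by simp)]
  simp [scanRedex]

theorem IsNormalWord.scanRedex_append_two {p : List (Fin 3)} (hp : IsNormalWord p)
    (u : List (Fin 3)) :
    scanRedex (p ++ 2 :: u) = none := by
  obtain ⟨a, b, rfl⟩ := hp
  rw [scanRedex_normalWord_append a b (by simp)]
  simp [scanRedex]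

end Scan

section Homotopy

def inversionCount : List (Fin 3) → ℕ
  | [] => 0
  | i :: u => (if i = 0 then u.count 1 else 0) + inversionCount u

theorem inversionCount_append (p u : List (Fin 3)) :
    inversionCount (p ++ u) = inversionCount p + p.count 0 * u.count 1 + inversionCount u := by
  induction p with
  | nil => simp [inversionCount]
  | cons i p ih =>
    simp only [List.cons_append, inversionCount, ih, List.count_cons, List.count_append]
    split_ifs <;> simp_all; ring

theorem inversionCount_swap_lt (p u : List (Fin 3)) :
    inversionCount (p ++ 1 :: 0 :: u) < inversionCount (p ++ 0 :: 1 :: u) := by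
  simp [inversionCount_append, inversionCount]

theorem inversionCount_erase_lt (p u : List (Fin 3)) :
    inversionCount (p ++ u) < inversionCount (p ++ 0 :: 1 :: u) := by
  simp [inversionCount_append, inversionCount]
  nlinarith

variable (k : Type) [Field k]

def homotopyWord (w : List (Fin 3)) : FA3 k :=
  match h : scanRedex w with
  | none => 0
  | some (p, u) =>
    ofWord k (p ++ 2 :: u) + homotopyWord (p ++ 1 :: 0 :: u) + homotopyWord (p ++ u)
termination_by inversionCount w
decreasing_by
  · rw [(scanRedex_eq_some h).1]; exact inversionCount_swap_lt p u
  · rw [(scanRedex_eq_some h).1]; exact inversionCount_erase_lt p u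

def homotopy : FA3 k →ₗ[k] FA3 k :=
  Finsupp.linearCombination k (fun w : FreeMonoid (Fin 3) => homotopyWord k w.toList) ∘ₗ
    (MonoidAlgebra.coeffLinearEquiv k).toLinearMap

variable {k}

theorem homotopyWord_of_scanRedex_eq_none {w : List (Fin 3)} (h : scanRedex w = none) :
    homotopyWord k w = 0 := by
  rw [homotopyWord, h]

theorem homotopyWord_of_scanRedex_eq_some {w p u : List (Fin 3)} (h : scanRedex w = some (p, u)) :
    homotopyWord k w =
      ofWord k (p ++ 2 :: u) + homotopyWord k (p ++ 1 :: 0 :: u) + homotopyWord k (p ++ u) := by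
  rw [homotopyWord, h]

theorem homotopy_ofWord (l : List (Fin 3)) : homotopy k (ofWord k l) = homotopyWord k l := by
  simp [homotopy, ofWord]

theorem homotopy_ofWord_mul_X2_mul {p : List (Fin 3)} (hp : IsNormalWord p) (f : FA3 k) :
    homotopy k (ofWord k p * (X 2 * f)) = 0 := by
  induction f using MonoidAlgebra.induction_linear with
  | zero => simp
  | add f g hf hg => rw [mul_add, mul_add, map_add, hf, hg, add_zero]
  | single w c =>
    rw [ofWord_mul_X_mul, ofWord_mul_single, map_smul, homotopy_ofWord, List.append_assoc,
      List.singleton_append, homotopyWord_of_scanRedex_eq_none (hp.scanRedex_append_two _),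
      smul_zero]

theorem homotopy_ofWord_mul_X0_mul_X1_mul {p : List (Fin 3)} (hp : IsNormalWord p) (f : FA3 k) :
    homotopy k (ofWord k p * (X 0 * (X 1 * f))) = ofWord k p * (X 2 * f) +
      homotopy k (ofWord k p * (X 1 * (X 0 * f))) + homotopy k (ofWord k p * f) := by
  induction f using MonoidAlgebra.induction_linear with
  | zero => simp
  | add f g hf hg =>
    simp only [mul_add, map_add, hf, hg]
    abel
  | single w c =>
    simp only [ofWord_mul_X_mul, ofWord_mul_single, map_smul, homotopy_ofWord, List.append_assoc,
      List.cons_append, List.nil_append]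
    rw [homotopyWord_of_scanRedex_eq_some (hp.scanRedex_append_zero_one _), smul_add, smul_add]

end Homotopy

section Defect

variable {k : Type} [Field k] {d : FA3 k →ₗ[k] FA3 k}

variable (d) in
def homotopyDefect : FA3 k →ₗ[k] FA3 k := LinearMap.id - d ∘ₗ homotopy k - homotopy k ∘ₗ d

theorem homotopyDefect_apply (f : FA3 k) :
    homotopyDefect d f = f - d (homotopy k f) - homotopy k (d f) := rfl

theorem IsWeylDifferential.homotopyDefect_ofWord_redex (hd : IsWeylDifferential d)
    {p : List (Fin 3)} (hp : IsNormalWord p) (u : List (Fin 3)) :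
    homotopyDefect d (ofWord k (p ++ 0 :: 1 :: u)) =
      homotopyDefect d (ofWord k (p ++ 1 :: 0 :: u)) + homotopyDefect d (ofWord k (p ++ u)) := by
  simp only [homotopyDefect_apply, homotopy_ofWord]
  rw [homotopyWord_of_scanRedex_eq_some (hp.scanRedex_append_zero_one u)]
  simp only [ofWord_append, ofWord_cons, hd.map_ofWord_mul hp.two_notMem,
    hd.map_X_mul (show (0 : Fin 3) ≠ 2 by decide), hd.map_X_mul (show (1 : Fin 3) ≠ 2 by decide),
    hd.map_X2_mul, homotopy_ofWord_mul_X0_mul_X1_mul hp, map_add]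
  noncomm_ring

theorem IsWeylDifferential.homotopyDefect_ofWord_two (hd : IsWeylDifferential d)
    {p : List (Fin 3)} (hp : IsNormalWord p) (u : List (Fin 3)) :
    homotopyDefect d (ofWord k (p ++ 2 :: u)) = 0 := by
  rw [homotopyDefect_apply, homotopy_ofWord,
    homotopyWord_of_scanRedex_eq_none (hp.scanRedex_append_two u), map_zero, sub_zero,
    ofWord_append, ofWord_cons, hd.map_ofWord_mul hp.two_notMem, hd.map_X2_mul]
  have hsplit : ofWord k p * ((X 0 * X 1 - X 1 * X 0 - 1) * ofWord k u - X 2 * d (ofWord k u)) =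
      ofWord k p * (X 0 * (X 1 * ofWord k u)) - ofWord k p * (X 1 * (X 0 * ofWord k u)) -
        ofWord k p * ofWord k u - ofWord k p * (X 2 * d (ofWord k u)) := by
    noncomm_ring
  rw [hsplit, map_sub, map_sub, map_sub, homotopy_ofWord_mul_X0_mul_X1_mul hp,
    homotopy_ofWord_mul_X2_mul hp]
  abel

theorem IsWeylDifferential.homotopyDefect_ofWord_mem (hd : IsWeylDifferential d)
    (w : List (Fin 3)) : homotopyDefect d (ofWord k w) ∈ normalSpan k := by
  induction hn : inversionCount w using Nat.strong_induction_on generalizing w with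
  | _ n ih =>
  rcases hs : scanRedex w with _ | ⟨p, u⟩
  · rcases scanRedex_eq_none hs with ⟨a, b, rfl⟩ | ⟨p, u, rfl, hp⟩
    · rw [homotopyDefect_apply, homotopy_ofWord, homotopyWord_of_scanRedex_eq_none hs,
        hd.map_ofWord (IsNormalWord.two_notMem (p := normalWord a b) ⟨a, b, rfl⟩), map_zero,
        map_zero, sub_zero, sub_zero]
      exact Submodule.subset_span ⟨(a, b), rfl⟩
    · rw [hd.homotopyDefect_ofWord_two hp]
      exact zero_mem _
  · obtain ⟨rfl, hp⟩ := scanRedex_eq_some hs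
    rw [hd.homotopyDefect_ofWord_redex hp]
    exact add_mem (ih _ (hn ▸ inversionCount_swap_lt p u) _ rfl)
      (ih _ (hn ▸ inversionCount_erase_lt p u) _ rfl)

theorem IsWeylDifferential.homotopyDefect_mem (hd : IsWeylDifferential d) (f : FA3 k) :
    homotopyDefect d f ∈ normalSpan k := by
  induction f using MonoidAlgebra.induction_linear with
  | zero => simp
  | add f g hf hg => exact map_add (homotopyDefect d) f g ▸ add_mem hf hg
  | single w c =>
    rw [single_eq_smul_ofWord, map_smul]
    exact Submodule.smul_mem _ c (hd.homotopyDefect_ofWord_mem _)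

end Defect

theorem stmt15_general (k : Type) [Field k] [CharZero k]
    (degs : Fin 3 → ℤ) (hdegs : degs = ![0, 0, -1])
    (d : FA3 k →ₗ[k] FA3 k)
    (hLeib : ∀ f g : FA3 k, d (f * g) = d f * g + sgn degs f * d g)
    (δ : FA3 k) (hδ : δ = X 0 * X 1 - X 1 * X 0 - 1)
    (hd0 : d (X 0) = 0) (hd1 : d (X 1) = 0) (hd3 : d (X 2) = δ) :
    -- `π` is a chain map to `(A₁, 0)`: it kills the image of `d`
    (∀ f : FA3 k, π k (d f) = 0) ∧
    -- surjectivity on cohomology: every element of `A₁` is the image of a cycle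
    (∀ w : Weyl k, ∃ f : FA3 k, d f = 0 ∧ π k f = w) ∧
    -- injectivity on cohomology: a cycle mapping to `0` is a boundary
    (∀ f : FA3 k, d f = 0 → π k f = 0 → ∃ g : FA3 k, d g = f) := by
  subst hdegs hδ
  have hd : IsWeylDifferential d := ⟨hLeib, hd0, hd1, hd3⟩
  refine ⟨hd.π_map_eq_zero, hd.exists_cycle_π_eq, fun f hf hπ => ⟨homotopy k f, ?_⟩⟩
  have hmem : f - d (homotopy k f) ∈ normalSpan k := by
    simpa [homotopyDefect_apply, hf] using hd.homotopyDefect_mem f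
  have hπ' : π k (f - d (homotopy k f)) = 0 := by
    rw [map_sub, hπ, hd.π_map_eq_zero, sub_zero]
  exact (sub_eq_zero.mp (eq_zero_of_mem_normalSpan_of_π_eq_zero hmem hπ')).symm

/-- Let `A = k⟨x₁, x₂, x₃⟩` (char k = 0) be the DG algebra with
`|x₁| = |x₂| = 0`, `|x₃| = −1`, `d x₁ = d x₂ = 0`, `d x₃ = δ = x₁x₂ − x₂x₁ − 1`. Then the
quotient map `π : A → A/(x₃, δ) ≅ A₁` (the Weyl algebra in degree 0 with zero differential)
is a quasi-isomorphism of DG algebras: `π` kills boundaries, every element of `A₁` lifts to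
a cycle, and every cycle killed by `π` is a boundary. In particular `H⁰(A) ≅ A₁` and
`Hⁿ(A) = 0` for `n ≠ 0`. -/
theorem stmt15 (k : Type) [Field k] [CharZero k]
    (degs : Fin 3 → ℤ) (hdegs : degs = ![0, 0, -1])
    (d : FA3 k →ₗ[k] FA3 k)
    (hd2 : ∀ f, d (d f) = 0)
    (hLeib : ∀ f g : FA3 k, d (f * g) = d f * g + sgn degs f * d g)
    (δ : FA3 k) (hδ : δ = X 0 * X 1 - X 1 * X 0 - 1)
    (hd0 : d (X 0) = 0) (hd1 : d (X 1) = 0) (hd3 : d (X 2) = δ) :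
    -- `π` is a chain map to `(A₁, 0)`: it kills the image of `d`
    (∀ f : FA3 k, π k (d f) = 0) ∧
    -- surjectivity on cohomology: every element of `A₁` is the image of a cycle
    (∀ w : Weyl k, ∃ f : FA3 k, d f = 0 ∧ π k f = w) ∧
    -- injectivity on cohomology: a cycle mapping to `0` is a boundary
    (∀ f : FA3 k, d f = 0 → π k f = 0 → ∃ g : FA3 k, d g = f) :=
  stmt15_general k degs hdegs d hLeib δ hδ hd0 hd1 hd3
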